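/- Let k be a field of characteristic zero, R = k[ℏ], and H a bialgebra over R that is free as an R-module, with Drinfeld maps δ_n and H′ := { η ∈ H : δ_n(η) ∈ ℏ^n·H^{⊗n} for all n ≥ 1 }. Then for all a, b ∈ H′, the commutator a·b − b·a lies in ℏ·H′; that is, there exists η ∈ H′ with a·b − b·a = ℏ·η. Consequently the quotient H′/ℏH′ is a commutative ring. -/

import Mathlib

set_option maxHeartbeats 800000


open scoped TensorProduct
noncomputable section

universe u
variable (R : Type u) [CommRing R] (H : Type u) [Ring H] [Bialgebra R H]

/-- The `n`-fold tensor power `H^{⊗n}` over `R` (with `H^{⊗0} = R`). -/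
def TpowB : ℕ → ModuleCat R
  | 0 => ModuleCat.of R R
  | n+1 => ModuleCat.of R (H ⊗[R] (TpowB n))

/-- The iterated coproducts `Δ^n : H → H^{⊗n}`, with `Δ^0 := ε`. -/
def DeltaB : (n : ℕ) → (H →ₗ[R] TpowB R H n)
  | 0 => Bialgebra.counitAlgHom R H |>.toLinearMap
  | n+1 => (TensorProduct.map LinearMap.id (DeltaB n)) ∘ₗ Coalgebra.comul

/-- `id - u ∘ ε : H → H`. -/
def projB : H →ₗ[R] H := LinearMap.id - (Algebra.linearMap R H) ∘ₗ Coalgebra.counit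

/-- `(id - u∘ε)^{⊗n} : H^{⊗n} → H^{⊗n}`. -/
def projPowB : (n : ℕ) → (TpowB R H n →ₗ[R] TpowB R H n)
  | 0 => LinearMap.id
  | n+1 => TensorProduct.map (projB R H) (projPowB n)

/-- Drinfeld's maps `δ_n := (id - u∘ε)^{⊗n} ∘ Δ^n : H → H^{⊗n}` (`δ_0 = ε`). -/
def deltaB (n : ℕ) : H →ₗ[R] TpowB R H n := projPowB R H n ∘ₗ DeltaB R H n

attribute [reducible] TpowB

-- multiplication on tensor powers, as a bilinear map
def mulT : ∀ n : ℕ, TpowB R H n →ₗ[R] TpowB R H n →ₗ[R] TpowB R H n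
  | 0 => LinearMap.mul R R
  | n+1 =>
    TensorProduct.lift
      (((TensorProduct.mapBilinear (RingHom.id R) H (TpowB R H n) H (TpowB R H n)).comp
          (LinearMap.mul R H)).compl₂ (mulT n))

lemma mulT_tmul (n : ℕ) (x y : H) (u v : TpowB R H n) :
    mulT R H (n+1) (x ⊗ₜ u) (y ⊗ₜ v) = (x * y) ⊗ₜ (mulT R H n u v) := by
  rw [mulT]
  erw [TensorProduct.lift.tmul]
  simp [TensorProduct.mapBilinear_apply, TensorProduct.map_tmul, Module.End.mul_apply]

-- the unit-composed-with-counit map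
def eB : H →ₗ[R] H := (Algebra.linearMap R H) ∘ₗ Coalgebra.counit

lemma delta_succ (n : ℕ) :
    deltaB R H (n+1) = (TensorProduct.map (projB R H) (deltaB R H n)) ∘ₗ Coalgebra.comul := by
  show (TensorProduct.map (projB R H) (projPowB R H n)) ∘ₗ
      ((TensorProduct.map LinearMap.id (DeltaB R H n)) ∘ₗ Coalgebra.comul) = _
  rw [← LinearMap.comp_assoc, ← TensorProduct.map_comp]
  rfl

lemma proj_add_e : projB R H + eB R H = LinearMap.id := by
  simp [projB, eB]

structure Ent (n : ℕ) where
  c : ℕ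
  pe : TpowB R H n →ₗ[R] TpowB R H n
  io : TpowB R H c →ₗ[R] TpowB R H n

def ents : ∀ n : ℕ, List (Ent R H n)
  | 0 => [⟨0, LinearMap.id, LinearMap.id⟩]
  | n+1 =>
    ((ents n).map fun e =>
      ⟨e.c + 1, TensorProduct.map (projB R H) e.pe, TensorProduct.map LinearMap.id e.io⟩)
    ++ ((ents n).map fun e =>
      ⟨e.c, TensorProduct.map (eB R H) e.pe, (TensorProduct.mk R H (TpowB R H n) 1) ∘ₗ e.io⟩)

lemma tp_map_zero_right (f : H →ₗ[R] H) (n : ℕ) :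
    TensorProduct.map f (0 : TpowB R H n →ₗ[R] TpowB R H n) = 0 := by
  apply TensorProduct.ext'
  intro x u
  simp

lemma tp_map_list_sum (f : H →ₗ[R] H) (n : ℕ) (l : List (TpowB R H n →ₗ[R] TpowB R H n)) :
    (l.map fun g => TensorProduct.map f g).sum = TensorProduct.map f l.sum := by
  induction l with
  | nil => simp [tp_map_zero_right]
  | cons a l ih => simp [ih, TensorProduct.map_add_right]

lemma sum_pe : ∀ n : ℕ, ((ents R H n).map fun e => e.pe).sum = LinearMap.id
  | 0 => by simp [ents]
  | n+1 => by
    rw [ents]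
    simp only [List.map_append, List.map_map, List.sum_append]
    have h1 : (((ents R H n).map fun e =>
        TensorProduct.map (projB R H) e.pe) : List (TpowB R H (n+1) →ₗ[R] TpowB R H (n+1))).sum
        = TensorProduct.map (projB R H) LinearMap.id := by
      rw [← sum_pe n, ← tp_map_list_sum]
      congr 1
      simp [Function.comp]
    have h2 : (((ents R H n).map fun e =>
        TensorProduct.map (eB R H) e.pe) : List (TpowB R H (n+1) →ₗ[R] TpowB R H (n+1))).sum
        = TensorProduct.map (eB R H) LinearMap.id := by
      rw [← sum_pe n, ← tp_map_list_sum]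
      congr 1
      simp [Function.comp]
    show (((ents R H n).map fun e => TensorProduct.map (projB R H) e.pe)).sum
        + (((ents R H n).map fun e => TensorProduct.map (eB R H) e.pe)).sum = LinearMap.id
    rw [h1, h2, ← TensorProduct.map_add_left, proj_add_e, TensorProduct.map_id]

lemma e_collapse (n : ℕ) (f : H →ₗ[R] TpowB R H n) :
    (TensorProduct.map (eB R H) f) ∘ₗ (Coalgebra.comul (R := R) (A := H))
      = (TensorProduct.mk R H (TpowB R H n) 1) ∘ₗ f := by
  have h : TensorProduct.map (eB R H) f
      = (TensorProduct.map (Algebra.linearMap R H) f) ∘ₗ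
        (LinearMap.rTensor H (Coalgebra.counit (R := R) (A := H))) := by
    rw [LinearMap.rTensor, ← TensorProduct.map_comp]
    rfl
  ext x
  simp only [LinearMap.comp_apply, h]
  rw [Coalgebra.rTensor_counit_comul]
  simp [eB]

lemma pe_comp : ∀ n : ℕ, ∀ e ∈ ents R H n,
    e.pe ∘ₗ DeltaB R H n = e.io ∘ₗ deltaB R H e.c
  | 0 => by
    intro e he
    simp only [ents, List.mem_singleton] at he
    subst he
    show LinearMap.id ∘ₗ DeltaB R H 0 = LinearMap.id ∘ₗ (projPowB R H 0 ∘ₗ DeltaB R H 0)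
    rfl
  | n+1 => by
    intro e he
    rw [ents, List.mem_append, List.mem_map, List.mem_map] at he
    rcases he with ⟨f, hf, rfl⟩ | ⟨f, hf, rfl⟩
    · show (TensorProduct.map (projB R H) f.pe) ∘ₗ
        ((TensorProduct.map LinearMap.id (DeltaB R H n)) ∘ₗ Coalgebra.comul)
        = (TensorProduct.map LinearMap.id f.io) ∘ₗ deltaB R H (f.c + 1)
      rw [delta_succ, ← LinearMap.comp_assoc, ← TensorProduct.map_comp,
        ← LinearMap.comp_assoc, ← TensorProduct.map_comp]
      have := pe_comp n f hf
      rw [LinearMap.id_comp, LinearMap.comp_id, this]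
    · show (TensorProduct.map (eB R H) f.pe) ∘ₗ
        ((TensorProduct.map LinearMap.id (DeltaB R H n)) ∘ₗ Coalgebra.comul)
        = ((TensorProduct.mk R H (TpowB R H n) 1) ∘ₗ f.io) ∘ₗ deltaB R H f.c
      rw [← LinearMap.comp_assoc, ← TensorProduct.map_comp, LinearMap.comp_id,
        e_collapse R H n (f.pe ∘ₗ DeltaB R H n), pe_comp n f hf,
        LinearMap.comp_assoc]

lemma DeltaB_mul : ∀ (n : ℕ) (x y : H),
    DeltaB R H n (x * y) = mulT R H n (DeltaB R H n x) (DeltaB R H n y)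
  | 0, x, y => by
    show Bialgebra.counitAlgHom R H (x * y) = _
    rw [map_mul]
    rfl
  | n+1, x, y => by
    show (TensorProduct.map LinearMap.id (DeltaB R H n)) (Coalgebra.comul (x * y)) = _
    have hc : (Coalgebra.comul (R := R) (A := H)) (x * y)
        = Coalgebra.comul (R := R) (A := H) x * Coalgebra.comul (R := R) (A := H) y := by
      have := map_mul (Bialgebra.comulAlgHom R H) x y
      simpa using this
    rw [hc]
    have key : ∀ z w : H ⊗[R] H,
        (TensorProduct.map LinearMap.id (DeltaB R H n)) (z * w)
        = mulT R H (n+1) ((TensorProduct.map LinearMap.id (DeltaB R H n)) z)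
            ((TensorProduct.map LinearMap.id (DeltaB R H n)) w) := by
      intro z w
      induction z using TensorProduct.induction_on with
      | zero => simp
      | add z₁ z₂ h1 h2 => simp [add_mul, h1, h2]
      | tmul xz uz =>
        induction w using TensorProduct.induction_on with
        | zero => simp
        | add w₁ w₂ h1 h2 => simp [mul_add, h1, h2]
        | tmul xw uw =>
          rw [Algebra.TensorProduct.tmul_mul_tmul]
          rw [TensorProduct.map_tmul, TensorProduct.map_tmul, TensorProduct.map_tmul]
          erw [mulT_tmul]
          rw [DeltaB_mul n uz uw]
          rfl
    exact key _ _

lemma projB_one : projB R H 1 = 0 := by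
  simp [projB, Bialgebra.counit_one]

section helpers
variable {c₁ c₂ : ℕ} (n : ℕ)

lemma zero_PP (g₁ : TpowB R H c₁ →ₗ[R] TpowB R H n) (g₂ : TpowB R H c₂ →ₗ[R] TpowB R H n)
    (h : ∀ u v, projPowB R H n (mulT R H n (g₁ u) (g₂ v)) = 0) :
    ∀ (ξ : TpowB R H (c₁+1)) (ζ : TpowB R H (c₂+1)),
      projPowB R H (n+1) (mulT R H (n+1)
        ((TensorProduct.map LinearMap.id g₁) ξ) ((TensorProduct.map LinearMap.id g₂) ζ)) = 0 := by
  intro ξ ζ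
  induction ξ using TensorProduct.induction_on with
  | zero => simp only [map_zero, LinearMap.zero_apply]
  | add ξ₁ ξ₂ h1 h2 => simp only [map_add, LinearMap.add_apply, h1, h2, add_zero]
  | tmul x u =>
    induction ζ using TensorProduct.induction_on with
    | zero => simp only [map_zero, LinearMap.zero_apply]
    | add ζ₁ ζ₂ h1 h2 => simp only [map_add, LinearMap.add_apply, h1, h2, add_zero]
    | tmul y v =>
      rw [TensorProduct.map_tmul, TensorProduct.map_tmul]
      rw [mulT_tmul]
      show TensorProduct.map (projB R H) (projPowB R H n) _ = 0
      rw [TensorProduct.map_tmul, h, TensorProduct.tmul_zero]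

lemma zero_PB (g₁ : TpowB R H c₁ →ₗ[R] TpowB R H n) (g₂ : TpowB R H c₂ →ₗ[R] TpowB R H n)
    (h : ∀ u v, projPowB R H n (mulT R H n (g₁ u) (g₂ v)) = 0) :
    ∀ (ξ : TpowB R H (c₁+1)) (ζ : TpowB R H c₂),
      projPowB R H (n+1) (mulT R H (n+1)
        ((TensorProduct.map LinearMap.id g₁) ξ) (((TensorProduct.mk R H (TpowB R H n) 1) ∘ₗ g₂) ζ)) = 0 := by
  intro ξ ζ
  induction ξ using TensorProduct.induction_on with
  | zero => simp only [map_zero, LinearMap.zero_apply]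
  | add ξ₁ ξ₂ h1 h2 => simp only [map_add, LinearMap.add_apply, h1, h2, add_zero]
  | tmul x u =>
    rw [TensorProduct.map_tmul, LinearMap.comp_apply, TensorProduct.mk_apply, mulT_tmul]
    show TensorProduct.map (projB R H) (projPowB R H n) _ = 0
    rw [TensorProduct.map_tmul, h, TensorProduct.tmul_zero]

lemma zero_BP (g₁ : TpowB R H c₁ →ₗ[R] TpowB R H n) (g₂ : TpowB R H c₂ →ₗ[R] TpowB R H n)
    (h : ∀ u v, projPowB R H n (mulT R H n (g₁ u) (g₂ v)) = 0) :
    ∀ (ξ : TpowB R H c₁) (ζ : TpowB R H (c₂+1)),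
      projPowB R H (n+1) (mulT R H (n+1)
        (((TensorProduct.mk R H (TpowB R H n) 1) ∘ₗ g₁) ξ) ((TensorProduct.map LinearMap.id g₂) ζ)) = 0 := by
  intro ξ ζ
  induction ζ using TensorProduct.induction_on with
  | zero => simp only [map_zero, LinearMap.zero_apply]
  | add ζ₁ ζ₂ h1 h2 => simp only [map_add, LinearMap.add_apply, h1, h2, add_zero]
  | tmul y v =>
    rw [TensorProduct.map_tmul, LinearMap.comp_apply, TensorProduct.mk_apply, mulT_tmul]
    show TensorProduct.map (projB R H) (projPowB R H n) _ = 0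
    rw [TensorProduct.map_tmul, h, TensorProduct.tmul_zero]

lemma zero_BB (g₁ : TpowB R H c₁ →ₗ[R] TpowB R H n) (g₂ : TpowB R H c₂ →ₗ[R] TpowB R H n) :
    ∀ (ξ : TpowB R H c₁) (ζ : TpowB R H c₂),
      projPowB R H (n+1) (mulT R H (n+1)
        (((TensorProduct.mk R H (TpowB R H n) 1) ∘ₗ g₁) ξ) (((TensorProduct.mk R H (TpowB R H n) 1) ∘ₗ g₂) ζ)) = 0 := by
  intro ξ ζ
  rw [LinearMap.comp_apply, LinearMap.comp_apply, TensorProduct.mk_apply, TensorProduct.mk_apply, mulT_tmul]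
  show TensorProduct.map (projB R H) (projPowB R H n) _ = 0
  rw [TensorProduct.map_tmul, one_mul, projB_one, TensorProduct.zero_tmul]

lemma comm_PB (g₁ : TpowB R H c₁ →ₗ[R] TpowB R H n) (g₂ : TpowB R H c₂ →ₗ[R] TpowB R H n)
    (h : ∀ u v, mulT R H n (g₁ u) (g₂ v) = mulT R H n (g₂ v) (g₁ u)) :
    ∀ (ξ : TpowB R H (c₁+1)) (ζ : TpowB R H c₂),
      mulT R H (n+1) ((TensorProduct.map LinearMap.id g₁) ξ) (((TensorProduct.mk R H (TpowB R H n) 1) ∘ₗ g₂) ζ)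
      = mulT R H (n+1) (((TensorProduct.mk R H (TpowB R H n) 1) ∘ₗ g₂) ζ) ((TensorProduct.map LinearMap.id g₁) ξ) := by
  intro ξ ζ
  induction ξ using TensorProduct.induction_on with
  | zero => simp only [map_zero, LinearMap.zero_apply]
  | add ξ₁ ξ₂ h1 h2 => simp only [map_add, LinearMap.add_apply, h1, h2, add_zero]
  | tmul x u =>
    rw [TensorProduct.map_tmul, LinearMap.comp_apply, TensorProduct.mk_apply, mulT_tmul, mulT_tmul]
    rw [h, one_mul, mul_one]

lemma comm_BB (g₁ : TpowB R H c₁ →ₗ[R] TpowB R H n) (g₂ : TpowB R H c₂ →ₗ[R] TpowB R H n)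
    (h : ∀ u v, mulT R H n (g₁ u) (g₂ v) = mulT R H n (g₂ v) (g₁ u)) :
    ∀ (ξ : TpowB R H c₁) (ζ : TpowB R H c₂),
      mulT R H (n+1) (((TensorProduct.mk R H (TpowB R H n) 1) ∘ₗ g₁) ξ) (((TensorProduct.mk R H (TpowB R H n) 1) ∘ₗ g₂) ζ)
      = mulT R H (n+1) (((TensorProduct.mk R H (TpowB R H n) 1) ∘ₗ g₂) ζ) (((TensorProduct.mk R H (TpowB R H n) 1) ∘ₗ g₁) ξ) := by
  intro ξ ζ
  rw [LinearMap.comp_apply, LinearMap.comp_apply, TensorProduct.mk_apply, TensorProduct.mk_apply, mulT_tmul, mulT_tmul]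
  rw [h]

end helpers

lemma mulT_zero_comm (u v : TpowB R H 0) : mulT R H 0 u v = mulT R H 0 v u := by
  change LinearMap.mul R R u v = LinearMap.mul R R v u
  simp only [LinearMap.mul_apply']
  exact mul_comm _ _

lemma tri : ∀ n : ℕ, ∀ e ∈ ents R H n, ∀ f ∈ ents R H n,
    (∀ ξ ζ, projPowB R H n (mulT R H n (e.io ξ) (f.io ζ)) = 0
        ∧ projPowB R H n (mulT R H n (f.io ζ) (e.io ξ)) = 0)
    ∨ ((∀ ξ ζ, mulT R H n (e.io ξ) (f.io ζ) = mulT R H n (f.io ζ) (e.io ξ)) ∧ e.c + f.c = n)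
    ∨ n + 1 ≤ e.c + f.c
  | 0 => by
    intro e he f hf
    simp only [ents, List.mem_singleton] at he hf
    subst he; subst hf
    right; left
    exact ⟨fun ξ ζ => mulT_zero_comm R H ξ ζ, rfl⟩
  | n+1 => by
    intro e he f hf
    rw [ents, List.mem_append, List.mem_map, List.mem_map] at he hf
    rcases he with ⟨e', he', rfl⟩ | ⟨e', he', rfl⟩ <;>
      rcases hf with ⟨f', hf', rfl⟩ | ⟨f', hf', rfl⟩
    · -- P , P
      rcases tri n e' he' f' hf' with h1 | ⟨h2, hc⟩ | h3
      · left
        intro ξ ζ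
        exact ⟨zero_PP R H n e'.io f'.io (fun u v => (h1 u v).1) ξ ζ,
          zero_PP R H n f'.io e'.io (fun u v => (h1 v u).2) ζ ξ⟩
      · right; right
        simp only []
        omega
      · right; right
        simp only []
        omega
    · -- P , B
      rcases tri n e' he' f' hf' with h1 | ⟨h2, hc⟩ | h3
      · left
        intro ξ ζ
        exact ⟨zero_PB R H n e'.io f'.io (fun u v => (h1 u v).1) ξ ζ,
          zero_BP R H n f'.io e'.io (fun u v => (h1 v u).2) ζ ξ⟩
      · right; left
        constructor
        · intro ξ ζ
          exact comm_PB R H n e'.io f'.io h2 ξ ζ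
        · simp only []
          omega
      · right; right
        simp only []
        omega
    · -- B , P
      rcases tri n e' he' f' hf' with h1 | ⟨h2, hc⟩ | h3
      · left
        intro ξ ζ
        exact ⟨zero_BP R H n e'.io f'.io (fun u v => (h1 u v).1) ξ ζ,
          zero_PB R H n f'.io e'.io (fun u v => (h1 v u).2) ζ ξ⟩
      · right; left
        constructor
        · intro ξ ζ
          exact (comm_PB R H n f'.io e'.io (fun u v => (h2 v u).symm) ζ ξ).symm
        · simp only []
          omega
      · right; right
        simp only []
        omega
    · -- B , B
      left
      intro ξ ζ
      exact ⟨zero_BB R H n e'.io f'.io ξ ζ, zero_BB R H n f'.io e'.io ζ ξ⟩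

lemma list_sum_apply {M N : Type u} [AddCommMonoid M] [AddCommMonoid N] [Module R M] [Module R N]
    (l : List (M →ₗ[R] N)) (x : M) : l.sum x = (l.map fun f => f x).sum := by
  induction l with
  | nil => simp
  | cons f l ih => simp [ih]

lemma list_sum_map_add {α M : Type*} [AddCommMonoid M] (l : List α) (f g : α → M) :
    (l.map fun x => f x + g x).sum = (l.map f).sum + (l.map g).sum := by
  induction l with
  | nil => simp
  | cons a l ih => simp [ih]; abel

lemma list_sum_map_sub {α M : Type*} [AddCommGroup M] (l : List α) (f g : α → M) :
    (l.map fun x => f x - g x).sum = (l.map f).sum - (l.map g).sum := by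
  induction l with
  | nil => simp
  | cons a l ih => simp [ih]; abel

lemma list_sum_map_zero {α M : Type*} [AddCommMonoid M] (l : List α) :
    (l.map fun _ => (0 : M)).sum = 0 := by
  induction l with
  | nil => simp
  | cons a l ih => simp [ih]

lemma sum_sum_comm {α β : Type*} {M : Type*} [AddCommMonoid M]
    (l₁ : List α) (l₂ : List β) (g : α → β → M) :
    (l₁.map fun a => (l₂.map (g a)).sum).sum = (l₂.map fun b => (l₁.map (fun a => g a b)).sum).sum := by
  induction l₁ with
  | nil => simp [list_sum_map_zero]
  | cons a l ih => simp only [List.map_cons, List.sum_cons, ih, list_sum_map_add]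

lemma delta_decomp (n : ℕ) (x : H) :
    DeltaB R H n x = ((ents R H n).map fun e => e.io (deltaB R H e.c x)).sum := by
  have h1 : DeltaB R H n x = (((ents R H n).map fun e : Ent R H n => e.pe).sum) (DeltaB R H n x) := by
    rw [sum_pe]; rfl
  rw [h1, list_sum_apply, List.map_map]
  congr 1
  refine List.map_congr_left ?_
  intro e he
  have := pe_comp R H n e he
  exact DFunLike.congr_fun this x

lemma mulT_sum_sum (n : ℕ) (l₁ l₂ : List (TpowB R H n)) :
    mulT R H n l₁.sum l₂.sum
      = (l₁.map fun u => (l₂.map fun v => mulT R H n u v).sum).sum := by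
  induction l₁ with
  | nil => simp
  | cons u l ih =>
    simp only [List.sum_cons, List.map_cons, map_add, LinearMap.add_apply, ih]
    congr 1
    rw [map_list_sum]

lemma map_double_sum (n : ℕ) (F : TpowB R H n →ₗ[R] TpowB R H n)
    (l₁ l₂ : List (TpowB R H n)) (g : TpowB R H n → TpowB R H n → TpowB R H n) :
    F ((l₁.map fun u => (l₂.map fun v => g u v).sum).sum)
      = (l₁.map fun u => (l₂.map fun v => F (g u v)).sum).sum := by
  induction l₁ with
  | nil => simp
  | cons u l ih =>
    simp only [List.map_cons, List.sum_cons, map_add, ih]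
    congr 1
    rw [map_list_sum, List.map_map]
    congr 1

lemma double_sum_sub {M : Type u} [AddCommGroup M] {α β : Type u}
    (l₁ : List α) (l₂ : List β) (g₁ g₂ : α → β → M) :
    (l₁.map fun u => (l₂.map fun v => g₁ u v).sum).sum
      - (l₁.map fun u => (l₂.map fun v => g₂ u v).sum).sum
      = (l₁.map fun u => (l₂.map fun v => g₁ u v - g₂ u v).sum).sum := by
  rw [← list_sum_map_sub]
  congr 1
  refine List.map_congr_left ?_
  intro u _
  rw [← list_sum_map_sub]

lemma mulT_smul_smul (n : ℕ) (r s : R) (u v : TpowB R H n) :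
    mulT R H n (r • u) (s • v) = (r * s) • mulT R H n u v := by
  rw [LinearMap.map_smul₂, map_smul, smul_smul]

def memDiv (hh : R) (x : H) : Prop := ∀ m : ℕ, ∃ w, deltaB R H m x = (hh ^ m) • w

lemma main_div (hh : R) (n : ℕ) (a b : H) (hda : memDiv R H hh a) (hdb : memDiv R H hh b) :
    ∃ w, deltaB R H n (a * b - b * a) = hh ^ (n+1) • w := by
  classical
  set S : Submodule R (TpowB R H n) :=
    LinearMap.range ((hh ^ (n+1)) • (LinearMap.id : TpowB R H n →ₗ[R] TpowB R H n)) with hS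
  have memS : ∀ z : TpowB R H n, z ∈ S ↔ ∃ w, z = hh ^ (n+1) • w := by
    intro z
    constructor
    · rintro ⟨y, hy⟩; exact ⟨y, by simpa using hy.symm⟩
    · rintro ⟨w, hw⟩; exact ⟨w, by simpa using hw.symm⟩
  suffices hmem : deltaB R H n (a * b - b * a) ∈ S by
    rcases (memS _).1 hmem with ⟨w, hw⟩; exact ⟨w, hw⟩
  set la : List (TpowB R H n) := (ents R H n).map fun e => e.io (deltaB R H e.c a) with hla
  set lb : List (TpowB R H n) := (ents R H n).map fun e => e.io (deltaB R H e.c b) with hlb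
  have h1 : DeltaB R H n (a * b) = (la.map fun u => (lb.map fun v => mulT R H n u v).sum).sum := by
    rw [DeltaB_mul, delta_decomp R H n a, delta_decomp R H n b, ← hla, ← hlb, mulT_sum_sum]
  have h2 : DeltaB R H n (b * a) = (la.map fun u => (lb.map fun v => mulT R H n v u).sum).sum := by
    rw [DeltaB_mul, delta_decomp R H n a, delta_decomp R H n b, ← hla, ← hlb, mulT_sum_sum]
    exact sum_sum_comm lb la fun v u => mulT R H n v u
  have key : deltaB R H n (a * b - b * a)
      = (la.map fun u => (lb.map fun v =>
          projPowB R H n (mulT R H n u v) - projPowB R H n (mulT R H n v u)).sum).sum := by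
    show projPowB R H n (DeltaB R H n (a * b - b * a)) = _
    rw [map_sub, h1, h2, map_sub, map_double_sum, map_double_sum, double_sum_sub]
  rw [key]
  refine list_sum_mem ?_
  intro t ht
  rw [hla, List.map_map, List.mem_map] at ht
  rcases ht with ⟨e, he, rfl⟩
  refine list_sum_mem ?_
  intro t ht
  rw [hlb, List.map_map, List.mem_map] at ht
  rcases ht with ⟨f, hf, rfl⟩
  simp only [Function.comp]
  rcases tri R H n e he f hf with hc1 | ⟨hc2, _⟩ | hc3
  · rw [(hc1 _ _).1, (hc1 _ _).2, sub_zero]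
    exact zero_mem S
  · rw [hc2, sub_self]
    exact zero_mem S
  · rcases hda e.c with ⟨wa, hwa⟩
    rcases hdb f.c with ⟨wb, hwb⟩
    rw [hwa, hwb]
    simp only [map_smul, LinearMap.smul_apply, smul_smul]
    rw [mul_comm (hh ^ f.c) (hh ^ e.c), ← smul_sub, ← pow_add]
    have hge : e.c + f.c = (n + 1) + (e.c + f.c - (n+1)) := by omega
    rw [hge, pow_add, ← smul_smul]
    rw [memS]
    exact ⟨_, rfl⟩

lemma projB_apply (x : H) : projB R H x = x - algebraMap R H (Coalgebra.counit x) := by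
  simp [projB]

lemma rid_delta_one (x : H) :
    (TensorProduct.rid R H) (deltaB R H 1 x) = projB R H x := by
  have hx : deltaB R H 1 x = (TensorProduct.map (projB R H) (deltaB R H 0)) (Coalgebra.comul x) :=
    DFunLike.congr_fun (delta_succ R H 0) x
  rw [hx]
  have key : ∀ z : H ⊗[R] H,
      (TensorProduct.rid R H) ((TensorProduct.map (projB R H) (deltaB R H 0)) z)
      = projB R H ((TensorProduct.rid R H) ((LinearMap.lTensor H (Coalgebra.counit (R := R) (A := H))) z)) := by
    intro z
    induction z using TensorProduct.induction_on with
    | zero => simp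
    | add z₁ z₂ h1 h2 => simp [h1, h2]
    | tmul x y =>
      rw [TensorProduct.map_tmul, LinearMap.lTensor_tmul, TensorProduct.rid_tmul,
        TensorProduct.rid_tmul, map_smul]
      rfl
  rw [key, Coalgebra.lTensor_counit_comul, TensorProduct.rid_tmul, one_smul]

def freeT (n : ℕ) [Module.Free R H] : Module.Free R (TpowB R H n) := by
  induction n with
  | zero => exact inferInstanceAs (Module.Free R R)
  | succ n ih =>
    letI := ih
    exact inferInstanceAs (Module.Free R (H ⊗[R] TpowB R H n))

lemma comm_red {A : Type u} [Ring A] (a b s t : A)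
    (hs : ∀ x : A, s * x = x * s) (ht : ∀ x : A, t * x = x * t) :
    (a - s) * (b - t) - (b - t) * (a - s) = a * b - b * a := by
  have h1 : (a - s) * (b - t) = a * b - a * t - s * b + s * t := by noncomm_ring
  have h2 : (b - t) * (a - s) = b * a - b * s - t * a + t * s := by noncomm_ring
  rw [h1, h2, ← hs b, ← ht a, ← hs t]
  abel

variable (k : Type u) [Field k] [CharZero k]
variable (H' : Type u) [Ring H'] [Bialgebra (Polynomial k) H']

/-- Membership in `H′ := { η ∈ H : δ_n(η) ∈ ℏ^n·H^{⊗n} for all n ≥ 1 }`,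
where `ℏ` is the polynomial variable `X` of `R = k[ℏ]`. -/
def memHprime (η : H') : Prop :=
  ∀ n : ℕ, 1 ≤ n → ∃ ξ : TpowB (Polynomial k) H' n,
    deltaB (Polynomial k) H' n η = (Polynomial.X : Polynomial k) ^ n • ξ

/-- Over `R = k[ℏ]` (`k` a field of characteristic zero), if the
bialgebra `H` is free as an `R`-module, then for all `a, b ∈ H′` the commutator
`a·b − b·a` lies in `ℏ·H′`: there is `η ∈ H′` with `a·b − b·a = ℏ·η`
(whence `H′/ℏH′` is commutative). -/
theorem stmt19 [Module.Free (Polynomial k) H'] (a b : H')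
    (ha : memHprime k H' a) (hb : memHprime k H' b) :
    ∃ η : H', memHprime k H' η ∧ a * b - b * a = (Polynomial.X : Polynomial k) • η := by
  have da : memDiv (Polynomial k) H' Polynomial.X a := by
    intro m
    rcases m with _ | m
    · exact ⟨deltaB (Polynomial k) H' 0 a, by rw [pow_zero, one_smul]⟩
    · exact ha (m+1) (Nat.succ_le_succ (Nat.zero_le m))
  have db : memDiv (Polynomial k) H' Polynomial.X b := by
    intro m
    rcases m with _ | m
    · exact ⟨deltaB (Polynomial k) H' 0 b, by rw [pow_zero, one_smul]⟩
    · exact hb (m+1) (Nat.succ_le_succ (Nat.zero_le m))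
  obtain ⟨ξa, hξa⟩ := ha 1 le_rfl
  obtain ⟨ξb, hξb⟩ := hb 1 le_rfl
  set a₁ : H' := (TensorProduct.rid (Polynomial k) H') ξa with ha₁
  set b₁ : H' := (TensorProduct.rid (Polynomial k) H') ξb with hb₁
  have hPa : projB (Polynomial k) H' a = (Polynomial.X : Polynomial k) • a₁ := by
    rw [← rid_delta_one, hξa, map_smul, pow_one]
  have hPb : projB (Polynomial k) H' b = (Polynomial.X : Polynomial k) • b₁ := by
    rw [← rid_delta_one, hξb, map_smul, pow_one]
  set η : H' := (Polynomial.X : Polynomial k) • (a₁ * b₁ - b₁ * a₁) with hη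
  have hcomm : a * b - b * a = (Polynomial.X : Polynomial k) • η := by
    have h1 := comm_red a b (algebraMap (Polynomial k) H' (Coalgebra.counit a))
      (algebraMap (Polynomial k) H' (Coalgebra.counit b))
      (fun x => (Algebra.commutes _ x)) (fun x => (Algebra.commutes _ x))
    rw [← h1, ← projB_apply, ← projB_apply, hPa, hPb, smul_mul_assoc, mul_smul_comm,
      smul_mul_assoc, mul_smul_comm, ← smul_sub, ← smul_sub, hη]
  refine ⟨η, ?_, hcomm⟩
  intro n hn
  obtain ⟨w, hw⟩ := main_div (Polynomial k) H' Polynomial.X n a b da db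
  have hδ : (Polynomial.X : Polynomial k) • deltaB (Polynomial k) H' n η
      = (Polynomial.X : Polynomial k) • ((Polynomial.X : Polynomial k) ^ n • w) := by
    rw [← map_smul, ← hcomm, hw, ← mul_smul, ← pow_succ']
  letI : Module.Free (Polynomial k) (TpowB (Polynomial k) H' n) := freeT (Polynomial k) H' n
  exact ⟨w, smul_right_injective (TpowB (Polynomial k) H' n) Polynomial.X_ne_zero hδ⟩
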